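/- For the finite Markov chain imbedding counting occupancy: let (Z_t)_{t=1..n} be an inhomogeneous two-state Markov chain, and let N_n = Σ_{t=1}^n 1{Z_t = 2} be the number of time points in state 2. Define W_t = (min(N_t, ℓ+1), Z_t) on a state space of size 2ℓ + 2 (states with more than ℓ visits collapsed into an absorbing state). Then (W_t) is an inhomogeneous Markov chain, and the distribution P(N_n = k) for k ≤ ℓ is given by summing the appropriate entries of η Π_{t=2}^n Λ(a_t, b_t), where Λ is the imbedding transition matrix whose structure follows from: from (k, 1) the chain stays at (k, 1) with probability a_t and moves to (k+1, 2) with probability 1−a_t; from (k, 2) it moves to (k, 1) with probability 1−b_t and to (k+1, 2) with probability b_t. -/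

import Mathlib

/-!
Let `g_n(m, s) = P(N_n = m, Z_n = s)`. Splitting off the last step of a path gives the forward
recursion `g_{n+1}(m, 1) = g_n(m, 1) a + g_n(m, 2) (1 - b)` and
`g_{n+1}(m + 1, 2) = g_n(m, 1) (1 - a) + g_n(m, 2) b`. List `g_n(m, 1)` at index `2m` and
`g_n(m, 2)` at index `2m - 1`: for every index `p ≤ 2ℓ`, the column of `Λ(a, b)` at `p` picks out
exactly the two predecessors of the recursion with these weights, and the overflow index `2ℓ + 1`
feeds only itself. Hence, by induction on `n`, `η̃ Π Λ` is the encoded `g_n` on all indices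
`≤ 2ℓ`; for `k ≤ ℓ` its entries at `2k` and `2k - 1` (the latter absent for `k = 0`, where
`g_n(0, 2) = 0`) add up to `g_n(k, 1) + g_n(k, 2) = P(N_n = k)`.
-/

open Finset
open scoped Classical

noncomputable section

/-- Path probability of an inhomogeneous two-state Markov chain `(Z_t)_{t=0..n}` on
`Fin 2` (state `0` is "state 1", state `1` is "state 2") with initial law `η`, stay
probabilities `a t = P(Z_{t+1} = 1 | Z_t = 1)` and `b t = P(Z_{t+1} = 2 | Z_t = 2)`. -/
def twoStateMu (n : ℕ) (η : Fin 2 → ℝ) (a b : Fin n → ℝ) (z : Fin (n + 1) → Fin 2) : ℝ :=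
  η (z 0) *
    ∏ t : Fin n,
      (if z t.castSucc = 0 then (if z t.succ = 0 then a t else 1 - a t)
       else (if z t.succ = 1 then b t else 1 - b t))

/-- The FMCI transition matrix for counting the number of positions in state 2: index
`0` encodes `(0 visits, state 1)`, index `2k−1` encodes `(k visits, state 2)`, index
`2k` encodes `(k visits, state 1)`, and index `2ℓ+1` is the absorbing overflow state.
From `(k, 1)` the chain stays at `(k, 1)` with probability `a` and moves to `(k+1, 2)`
with probability `1−a`; from `(k, 2)` it moves to `(k, 1)` with probability `1−b` and
to `(k+1, 2)` with probability `b`. -/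
def occLambda (ℓ : ℕ) (a b : ℝ) : Matrix (Fin (2 * ℓ + 2)) (Fin (2 * ℓ + 2)) ℝ :=
  fun p q =>
    if (p : ℕ) = 2 * ℓ + 1 then (if q = p then 1 else 0)
    else if (p : ℕ) % 2 = 0 then
      (if q = p then a else if (q : ℕ) = (p : ℕ) + 1 then 1 - a else 0)
    else
      (if (q : ℕ) = (p : ℕ) + 1 then 1 - b else if (q : ℕ) = (p : ℕ) + 2 then b else 0)


lemma Fin.sum_tuple_snoc {α M : Type*} [Fintype α] [AddCommMonoid M] {n : ℕ}
    (f : (Fin (n + 1) → α) → M) :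
    ∑ z, f z = ∑ z : Fin n → α, ∑ s, f (Fin.snoc z s) := by
  rw [← (Fin.snocEquiv fun _ => α).sum_comp, Fintype.sum_prod_type, sum_comm]
  rfl

lemma Fin.sum_ite_val_add_eq {M : Type*} [AddCommMonoid M] {N : ℕ} (f : ℕ → M) (d p : ℕ)
    (hp : p < N) :
    ∑ q : Fin N, (if (q : ℕ) + d = p then f q else 0) = if d ≤ p then f (p - d) else 0 := by
  rw [Fin.sum_univ_eq_sum_range (fun q => if q + d = p then f q else 0)]
  split_ifs with hd
  · rw [sum_eq_single (p - d) (fun q _ hq => if_neg (by omega))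
      (fun h => absurd (mem_range.mpr (by omega)) h), if_pos (by omega)]
  · exact sum_eq_zero fun q _ => if_neg (by omega)

namespace FMCIOccupancy

def visits {m : ℕ} (z : Fin m → Fin 2) : ℕ := #{t | z t = 1}

lemma visits_snoc {n : ℕ} (z : Fin (n + 1) → Fin 2) (s : Fin 2) :
    visits (Fin.snoc z s : Fin (n + 2) → Fin 2) = visits z + s := by
  simp only [visits, card_filter, Fin.sum_univ_castSucc, Fin.snoc_castSucc, Fin.snoc_last]
  fin_cases s <;> rfl

lemma visits_fin_one_const (s : Fin 2) : visits (fun _ : Fin 1 => s) = s := by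
  fin_cases s <;> rfl

def twoStateStep (a b : ℝ) (u s : Fin 2) : ℝ :=
  if u = 0 then (if s = 0 then a else 1 - a) else (if s = 1 then b else 1 - b)

lemma twoStateMu_zero (η : Fin 2 → ℝ) (a b : Fin 0 → ℝ) (z : Fin 1 → Fin 2) :
    twoStateMu 0 η a b z = η (z 0) := by
  simp [twoStateMu]

lemma twoStateMu_snoc {n : ℕ} (η : Fin 2 → ℝ) (a b : Fin (n + 1) → ℝ)
    (z : Fin (n + 1) → Fin 2) (s : Fin 2) :
    twoStateMu (n + 1) η a b (Fin.snoc z s) =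
      twoStateMu n η (Fin.init a) (Fin.init b) z *
        twoStateStep (a (Fin.last n)) (b (Fin.last n)) (z (Fin.last n)) s := by
  have h0 : (Fin.snoc z s : Fin (n + 2) → Fin 2) 0 = z 0 := Fin.snoc_castSucc (i := 0) ..
  simp only [twoStateMu, twoStateStep, Fin.prod_univ_castSucc, h0, Fin.snoc_castSucc,
    Fin.succ_castSucc, Fin.succ_last, Fin.snoc_last, Fin.init, mul_assoc]

def jointLaw {n : ℕ} (η : Fin 2 → ℝ) (a b : Fin n → ℝ) (m : ℕ) (s : Fin 2) : ℝ :=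
  ∑ z : Fin (n + 1) → Fin 2 with visits z = m ∧ z (Fin.last n) = s, twoStateMu n η a b z

lemma sum_jointLaw {n : ℕ} (η : Fin 2 → ℝ) (a b : Fin n → ℝ) (m : ℕ) :
    ∑ s, jointLaw η a b m s =
      ∑ z : Fin (n + 1) → Fin 2 with visits z = m, twoStateMu n η a b z := by
  simp only [jointLaw, ← filter_filter]
  exact sum_fiberwise _ _ _

lemma jointLaw_zero (η : Fin 2 → ℝ) (a b : Fin 0 → ℝ) (m : ℕ) (s : Fin 2) :
    jointLaw η a b m s = if m = s then η s else 0 := by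
  rw [jointLaw, sum_filter, Fintype.sum_eq_single (fun _ => s)]
  · simp [twoStateMu_zero, visits_fin_one_const, eq_comm]
  · refine fun z hz => if_neg fun ⟨_, hlast⟩ => hz (funext fun t => ?_)
    exact (congrArg z (Subsingleton.elim (α := Fin 1) t _)).trans hlast

lemma jointLaw_zero_one {n : ℕ} (η : Fin 2 → ℝ) (a b : Fin n → ℝ) : jointLaw η a b 0 1 = 0 := by
  refine sum_eq_zero fun z hz => absurd hz ?_
  simp only [mem_filter, mem_univ, true_and, visits, card_eq_zero, not_and]
  exact fun h hlast => (filter_eq_empty_iff.mp h) (mem_univ _) hlast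

lemma jointLaw_succ {n : ℕ} (η : Fin 2 → ℝ) (a b : Fin (n + 1) → ℝ) (m : ℕ) (s : Fin 2) :
    jointLaw η a b (m + s) s =
      ∑ u, jointLaw η (Fin.init a) (Fin.init b) m u *
        twoStateStep (a (Fin.last n)) (b (Fin.last n)) u s := by
  simp only [jointLaw, sum_filter, sum_mul, Fin.sum_tuple_snoc (n := n + 1), visits_snoc,
    twoStateMu_snoc, Fin.snoc_last]
  conv_rhs => rw [sum_comm]
  refine sum_congr rfl fun z _ => ?_
  rw [Fintype.sum_eq_single s fun u hu => by simp [hu],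
    Fintype.sum_eq_single (z (Fin.last n)) fun u hu => by simp [Ne.symm hu]]
  simp

lemma jointLaw_succ_zero {n : ℕ} (η : Fin 2 → ℝ) (a b : Fin (n + 1) → ℝ) (m : ℕ) :
    jointLaw η a b m 0 =
      jointLaw η (Fin.init a) (Fin.init b) m 0 * a (Fin.last n) +
        jointLaw η (Fin.init a) (Fin.init b) m 1 * (1 - b (Fin.last n)) := by
  simpa [Fin.sum_univ_two, twoStateStep] using jointLaw_succ η a b m 0

lemma jointLaw_succ_one {n : ℕ} (η : Fin 2 → ℝ) (a b : Fin (n + 1) → ℝ) (m : ℕ) :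
    jointLaw η a b (m + 1) 1 =
      jointLaw η (Fin.init a) (Fin.init b) m 0 * (1 - a (Fin.last n)) +
        jointLaw η (Fin.init a) (Fin.init b) m 1 * b (Fin.last n) := by
  simpa [Fin.sum_univ_two, twoStateStep] using jointLaw_succ η a b m 1

/-- Reads `g : ℕ → Fin 2 → ℝ` at an index of the imbedded chain, inverting the encoding of
`occLambda`: index `2m` is the state `(m, 1)`, index `2m - 1` the state `(m, 2)`. -/
def occDecode (g : ℕ → Fin 2 → ℝ) (q : ℕ) : ℝ :=
  g ((q + 1) / 2) (if q % 2 = 0 then 0 else 1)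

lemma occDecode_two_mul (g : ℕ → Fin 2 → ℝ) (m : ℕ) : occDecode g (2 * m) = g m 0 := by
  simp [occDecode, Nat.mul_add_div]

lemma occDecode_pred_two_mul {g : ℕ → Fin 2 → ℝ} (hg : g 0 1 = 0) (m : ℕ) :
    (if 1 ≤ 2 * m then occDecode g (2 * m - 1) else 0) = g m 1 := by
  rcases m with _ | m
  · simp [hg]
  · rw [if_pos (by omega), show 2 * (m + 1) - 1 = 2 * m + 1 by omega]
    simp [occDecode, show (2 * m + 1 + 1) / 2 = m + 1 by omega, Nat.add_mod]

-- The offsets are written out, `+ 0` included, so that `Fin.sum_ite_val_add_eq` applies termwise.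
lemma occLambda_apply_of_le {ℓ : ℕ} (a b : ℝ) (q p : Fin (2 * ℓ + 2)) (hp : (p : ℕ) ≤ 2 * ℓ) :
    occLambda ℓ a b q p =
      if (p : ℕ) % 2 = 0 then
        (if (q : ℕ) + 0 = p then a else 0) + (if (q : ℕ) + 1 = p then 1 - b else 0)
      else
        (if (q : ℕ) + 1 = p then 1 - a else 0) + (if (q : ℕ) + 2 = p then b else 0) := by
  unfold occLambda
  simp only [Fin.ext_iff]
  split_ifs <;> first | rfl | omega | simp

lemma vecMul_occLambda_apply {ℓ : ℕ} (a b : ℝ) (v : Fin (2 * ℓ + 2) → ℝ) (f : ℕ → ℝ)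
    (hv : ∀ q : Fin (2 * ℓ + 2), (q : ℕ) ≤ 2 * ℓ → v q = f q) (p : Fin (2 * ℓ + 2))
    (hp : (p : ℕ) ≤ 2 * ℓ) :
    Matrix.vecMul v (occLambda ℓ a b) p =
      if (p : ℕ) % 2 = 0 then
        f p * a + (if 1 ≤ (p : ℕ) then f (p - 1) else 0) * (1 - b)
      else
        (if 1 ≤ (p : ℕ) then f (p - 1) else 0) * (1 - a) +
          (if 2 ≤ (p : ℕ) then f (p - 2) else 0) * b := by
  have hcol : ∀ q, v q * occLambda ℓ a b q p = f q * occLambda ℓ a b q p := by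
    intro q
    by_cases hq : (q : ℕ) ≤ 2 * ℓ
    · rw [hv q hq]
    · simp [occLambda_apply_of_le a b q p hp, show ¬(q : ℕ) + 1 = p by omega,
        show ¬(q : ℕ) + 2 = p by omega, show ¬(q : ℕ) = p by omega]
  simp only [Matrix.vecMul, dotProduct, hcol]
  by_cases hpar : (p : ℕ) % 2 = 0 <;>
    simp only [occLambda_apply_of_le a b _ p hp, hpar, if_true, if_false, mul_add, mul_ite,
      mul_zero, sum_add_distrib, ← ite_zero_mul, ← sum_mul, Fin.sum_ite_val_add_eq _ _ _ p.isLt,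
      zero_le, Nat.sub_zero]

lemma vecMul_occLambda_occDecode {ℓ : ℕ} (a b : ℝ) {g g' : ℕ → Fin 2 → ℝ} (hg : g 0 1 = 0)
    (hg'0 : ∀ m, g' m 0 = g m 0 * a + g m 1 * (1 - b))
    (hg'1 : ∀ m, g' (m + 1) 1 = g m 0 * (1 - a) + g m 1 * b)
    {v : Fin (2 * ℓ + 2) → ℝ} (hv : ∀ q : Fin (2 * ℓ + 2), (q : ℕ) ≤ 2 * ℓ → v q = occDecode g q)
    (p : Fin (2 * ℓ + 2)) (hp : (p : ℕ) ≤ 2 * ℓ) :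
    Matrix.vecMul v (occLambda ℓ a b) p = occDecode g' p := by
  rw [vecMul_occLambda_apply a b v _ hv p hp]
  obtain ⟨m, hm | hm⟩ := Nat.even_or_odd' (p : ℕ) <;> rw [hm]
  · simp only [Nat.mul_mod_right, if_true, occDecode_two_mul, occDecode_pred_two_mul hg, hg'0]
  · have hodd : (2 * m + 1) % 2 ≠ 0 := by omega
    simp only [show 2 ≤ 2 * m + 1 ↔ 1 ≤ 2 * m by omega, show 2 * m + 1 - 2 = 2 * m - 1 by omega]
    rw [if_neg hodd, if_pos (by omega), show 2 * m + 1 - 1 = 2 * m by omega, occDecode_two_mul,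
      occDecode_pred_two_mul hg]
    simp [occDecode, show (2 * m + 1 + 1) / 2 = m + 1 by omega, hg'1]

def occInit (ℓ : ℕ) (η : Fin 2 → ℝ) : Fin (2 * ℓ + 2) → ℝ :=
  fun p => if (p : ℕ) = 0 then η 0 else if (p : ℕ) = 1 then η 1 else 0

def occVec (ℓ : ℕ) {n : ℕ} (η : Fin 2 → ℝ) (a b : Fin n → ℝ) : Fin (2 * ℓ + 2) → ℝ :=
  Matrix.vecMul (occInit ℓ η) ((List.finRange n).map fun t => occLambda ℓ (a t) (b t)).prod

lemma occVec_zero (ℓ : ℕ) (η : Fin 2 → ℝ) (a b : Fin 0 → ℝ) : occVec ℓ η a b = occInit ℓ η := by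
  simp [occVec]

lemma occVec_succ (ℓ : ℕ) {n : ℕ} (η : Fin 2 → ℝ) (a b : Fin (n + 1) → ℝ) :
    occVec ℓ η a b =
      Matrix.vecMul (occVec ℓ η (Fin.init a) (Fin.init b))
        (occLambda ℓ (a (Fin.last n)) (b (Fin.last n))) := by
  simp [occVec, List.finRange_succ_last, Matrix.vecMul_vecMul, Fin.init, Function.comp_def]

lemma occVec_eq_occDecode_jointLaw (ℓ : ℕ) {n : ℕ} (η : Fin 2 → ℝ) (a b : Fin n → ℝ)
    (p : Fin (2 * ℓ + 2)) (hp : (p : ℕ) ≤ 2 * ℓ) :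
    occVec ℓ η a b p = occDecode (jointLaw η a b) p := by
  induction n generalizing p with
  | zero =>
    rw [occVec_zero, occInit, occDecode, jointLaw_zero]
    obtain ⟨m, hm | hm⟩ := Nat.even_or_odd' (p : ℕ) <;> rcases m with _ | m <;>
      simp [hm, show ∀ j : ℕ, (2 * (j + 1) + 1 + 1) / 2 ≠ 1 from fun j => by omega]
  | succ n ih =>
    rw [occVec_succ]
    exact vecMul_occLambda_occDecode _ _ (jointLaw_zero_one η _ _) (jointLaw_succ_zero η a b)
      (jointLaw_succ_one η a b) (fun q hq => ih _ _ q hq) p hp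

lemma sum_filter_occDecode {ℓ : ℕ} {g : ℕ → Fin 2 → ℝ} (hg : g 0 1 = 0)
    {v : Fin (2 * ℓ + 2) → ℝ} (hv : ∀ q : Fin (2 * ℓ + 2), (q : ℕ) ≤ 2 * ℓ → v q = occDecode g q)
    {k : ℕ} (hk : k ≤ ℓ) :
    ∑ p ∈ univ.filter (fun p : Fin (2 * ℓ + 2) => ((p : ℕ) + 1) / 2 = k), v p =
      g k 0 + g k 1 := by
  have hsplit : ∀ p : Fin (2 * ℓ + 2), (if ((p : ℕ) + 1) / 2 = k then v p else 0) =
      (if (p : ℕ) + 0 = 2 * k then occDecode g p else 0) +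
        (if (p : ℕ) + 1 = 2 * k then occDecode g p else 0) := by
    intro p
    by_cases hpk : ((p : ℕ) + 1) / 2 = k
    · rw [if_pos hpk, hv p (by omega)]
      split_ifs <;> first | omega | simp
    · rw [if_neg hpk, if_neg (by omega), if_neg (by omega), add_zero]
  rw [sum_filter, sum_congr rfl fun p _ => hsplit p, sum_add_distrib,
    Fin.sum_ite_val_add_eq _ _ _ (by omega), Fin.sum_ite_val_add_eq _ _ _ (by omega),
    occDecode_pred_two_mul hg]
  simp [occDecode_two_mul]

end FMCIOccupancy

theorem fmci_occupancy_general (n ℓ : ℕ) (η : Fin 2 → ℝ)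
    (a b : Fin n → ℝ)
    (k : ℕ) (hk : k ≤ ℓ) :
    ∑ z ∈ univ.filter (fun z : Fin (n + 1) → Fin 2 =>
        (univ.filter (fun t : Fin (n + 1) => z t = 1)).card = k),
      twoStateMu n η a b z
    =
    ∑ p ∈ univ.filter (fun p : Fin (2 * ℓ + 2) => ((p : ℕ) + 1) / 2 = k),
      Matrix.vecMul
        (fun p : Fin (2 * ℓ + 2) =>
          if (p : ℕ) = 0 then η 0 else if (p : ℕ) = 1 then η 1 else 0)
        (((List.finRange n).map (fun t => occLambda ℓ (a t) (b t))).prod)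
        p := by
  have hlaw := FMCIOccupancy.sum_jointLaw η a b k
  have hvec := FMCIOccupancy.sum_filter_occDecode (FMCIOccupancy.jointLaw_zero_one η a b)
    (FMCIOccupancy.occVec_eq_occDecode_jointLaw ℓ η a b) hk
  rw [Fin.sum_univ_two] at hlaw
  exact hlaw.symm.trans hvec.symm

/-- **FMCI for the occupancy of state 2.** Let `(Z_t)_{t=0..n}` be an inhomogeneous
two-state Markov chain with stay probabilities `a_t`, `b_t` and initial law
`η = (η₁, η₂)`, and let `N_n` count the time points in state 2 (including time 1).
Then for every `k ≤ ℓ`, `P(N_n = k)` equals the sum of the entries with visit-count `k`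
of the row vector `η̃ Π_t Λ(a_t, b_t)`, where `η̃` assigns `η₁` to `(0,1)` and `η₂` to
`(1,2)`. -/
theorem fmci_occupancy (n ℓ : ℕ) (hℓ : 1 ≤ ℓ) (η : Fin 2 → ℝ)
    (hη0 : ∀ i, 0 ≤ η i) (hη1 : η 0 + η 1 = 1)
    (a b : Fin n → ℝ)
    (ha : ∀ t, a t ∈ Set.Icc (0 : ℝ) 1) (hb : ∀ t, b t ∈ Set.Icc (0 : ℝ) 1)
    (k : ℕ) (hk : k ≤ ℓ) :
    ∑ z ∈ univ.filter (fun z : Fin (n + 1) → Fin 2 =>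
        (univ.filter (fun t : Fin (n + 1) => z t = 1)).card = k),
      twoStateMu n η a b z
    =
    ∑ p ∈ univ.filter (fun p : Fin (2 * ℓ + 2) => ((p : ℕ) + 1) / 2 = k),
      Matrix.vecMul
        (fun p : Fin (2 * ℓ + 2) =>
          if (p : ℕ) = 0 then η 0 else if (p : ℕ) = 1 then η 1 else 0)
        (((List.finRange n).map (fun t => occLambda ℓ (a t) (b t))).prod)
        p :=
  fmci_occupancy_general n ℓ η a b k hk
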